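/- In the SGD setting of the paper with i.i.d. uniform-on-[-c,c]^{P(a)} initializations, for every κ ∈ (0,1) and every k ∈ N there exists an architecture a = (a_0,...,a_D) with min{D, a_1,...,a_{D-1}} ≥ k such that for all batch sizes M ∈ N, inf_{T ∈ N_0} E[min{∫ |𝔠(N_a^{Θ*}(x)) - E(x)| P_X(dx), 1}] ≥ κ · min{inf_{b∈R} E[|b - E(X)|], 1}, where Θ* is the empirical-risk-minimizing parameter among N trajectories and T+1 steps. -/

import Mathlib

open MeasureTheory ProbabilityTheory

noncomputable section

/-- `layerSum a j = ∑_{i=1}^{j} a_i (a_{i-1}+1)`, the number of parameters in layers `1,…,j`. -/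
def layerSum (a : ℕ → ℕ) (j : ℕ) : ℕ := ∑ i ∈ Finset.Icc 1 j, a i * (a (i - 1) + 1)

/-- The affine map of a layer with `m` outputs, `n` inputs, parameters read from `θ`
starting at offset `k` (weights row-wise, then biases). -/
def affApply (m n : ℕ) (θ : ℕ → ℝ) (k : ℕ) (y : Fin n → ℝ) : Fin m → ℝ :=
  fun i => (∑ l : Fin n, θ (k + i.val * n + l.val) * y l) + θ (k + m * n + i.val)

/-- Forward pass through the first `j` layers of the network, with componentwise ReLU
applied after each affine layer. -/
def fwd (a : ℕ → ℕ) (θ : ℕ → ℝ) (x : Fin (a 0) → ℝ) : (j : ℕ) → Fin (a j) → ℝ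
  | 0 => x
  | j + 1 => fun i => max (affApply (a (j + 1)) (a j) θ (layerSum a j) (fwd a θ x j) i) 0

/-- The realization `N_a^θ : ℝ^{a 0} → ℝ^{a D}` of the fully connected feedforward ReLU
network with architecture `a = (a 0, …, a D)` and parameters `θ`:
ReLU after each of the hidden layers `1,…,D-1`, linear read-out layer `D`. -/
def realization (a : ℕ → ℕ) (D : ℕ) (θ : ℕ → ℝ) (x : Fin (a 0) → ℝ) : Fin (a D) → ℝ :=
  affApply (a D) (a (D - 1)) θ (layerSum a (D - 1)) (fwd a θ x (D - 1))

/-- All weights and biases of layer `j` (the parameter block with indices in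
`[layerSum a (j-1), layerSum a j)`) are strictly negative. -/
def layerNeg (a : ℕ → ℕ) (j : ℕ) (θ : ℕ → ℝ) : Prop :=
  ∀ i, layerSum a (j - 1) ≤ i → i < layerSum a j → θ i < 0

/-- The inactive set `I_a`: some hidden layer `j` with `1 < j < D` has all its weights and
biases strictly negative. -/
def Inactive (a : ℕ → ℕ) (D : ℕ) (θ : ℕ → ℝ) : Prop :=
  ∃ j, 1 < j ∧ j < D ∧ layerNeg a j θ

end

/-!
If a hidden layer `j ≥ 2` has all its weights and biases negative, it receives the
nonnegative outputs of a ReLU layer, so its own output vanishes and the network is constant.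
Perturbing one parameter of that layer keeps it negative, so the empirical risk is locally
constant in each of these parameters, their partial derivatives vanish, and SGD never moves
them: the network stays constant along the whole trajectory, and a constant predictor `b` has
true risk at least `inf_b E|b - E(X)|`. For a uniform initialization on `[-c, c]`, each of the
`D - 2` hidden-to-hidden layers of width `W` is negative with probability `2^{-W(W+1)}`,
independently, so all `N` initializations are of this kind with probability
`(1 - (1 - 2^{-W(W+1)})^{D-2})^N`, which exceeds `κ` once `D` is large.
-/

open Filter Topology

section Network

variable {a : ℕ → ℕ} {D j : ℕ} {θ θ' : ℕ → ℝ}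

lemma layerSum_succ (a : ℕ → ℕ) (m : ℕ) :
    layerSum a (m + 1) = layerSum a m + a (m + 1) * (a m + 1) := by
  rw [layerSum, Finset.sum_Icc_succ_top (by omega), ← layerSum]
  simp

lemma layerSum_mono (a : ℕ → ℕ) : Monotone (layerSum a) := fun _ _ h =>
  Finset.sum_le_sum_of_subset (Finset.Icc_subset_Icc_right h)

def layerBlock (a : ℕ → ℕ) (j : ℕ) : Finset ℕ := Finset.Ico (layerSum a (j - 1)) (layerSum a j)

lemma layerNeg_iff : layerNeg a j θ ↔ ∀ i ∈ layerBlock a j, θ i < 0 := by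
  simp [layerNeg, layerBlock, and_imp]

lemma card_layerBlock (a : ℕ → ℕ) {j : ℕ} (hj : 1 ≤ j) :
    (layerBlock a j).card = a j * (a (j - 1) + 1) := by
  obtain ⟨m, rfl⟩ : ∃ m, j = m + 1 := ⟨j - 1, by omega⟩
  simp [layerBlock, layerSum_succ]

lemma disjoint_layerBlock (a : ℕ → ℕ) {j j' : ℕ} (h : j ≠ j') :
    Disjoint (layerBlock a j) (layerBlock a j') := by
  wlog hlt : j < j' generalizing j j'
  · exact (this h.symm (by omega)).symm
  have := layerSum_mono a (show j ≤ j' - 1 by omega)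
  simp only [layerBlock, Finset.disjoint_left, Finset.mem_Ico]
  omega

lemma affApply_congr {m n k : ℕ} {y : Fin n → ℝ} (hθ : ∀ i, k ≤ i → θ i = θ' i) :
    affApply m n θ k y = affApply m n θ' k y := by
  funext i
  rw [affApply, affApply, hθ (k + m * n + i) (by omega)]
  exact congrArg (· + _) (Finset.sum_congr rfl fun l _ => by rw [hθ _ (by omega)])

lemma fwd_congr_of_le {x x' : Fin (a 0) → ℝ} (hθ : ∀ i, layerSum a j ≤ i → θ i = θ' i)
    (hj : fwd a θ x j = fwd a θ' x' j) {j' : ℕ} (hjj' : j ≤ j') :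
    fwd a θ x j' = fwd a θ' x' j' := by
  induction j', hjj' using Nat.le_induction with
  | base => exact hj
  | succ j' hjj' ih =>
    rw [fwd, fwd, ih, affApply_congr fun i hi => hθ i ((layerSum_mono a hjj').trans hi)]

lemma fwd_nonneg {x : Fin (a 0) → ℝ} {j : ℕ} (hj : 1 ≤ j) (i : Fin (a j)) :
    0 ≤ fwd a θ x j i := by
  obtain ⟨m, rfl⟩ : ∃ m, j = m + 1 := ⟨j - 1, by omega⟩
  exact le_max_right _ _

lemma fwd_eq_zero_of_layerNeg (hj : 2 ≤ j) (hθ : layerNeg a j θ) (x : Fin (a 0) → ℝ) :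
    fwd a θ x j = 0 := by
  obtain ⟨m, rfl⟩ : ∃ m, j = m + 1 := ⟨j - 1, by omega⟩
  funext i
  have hblock : ∀ r < a (m + 1) * a m + a (m + 1), θ (layerSum a m + r) < 0 := fun r hr =>
    hθ _ (by simp) (by rw [layerSum_succ]; nlinarith)
  have hweights : ∑ l : Fin (a m), θ (layerSum a m + i * a m + l) * fwd a θ x m l ≤ 0 :=
    Finset.sum_nonpos fun l _ => mul_nonpos_of_nonpos_of_nonneg
      (by rw [add_assoc]; exact (hblock _ (by nlinarith [i.isLt, l.isLt])).le)
      (fwd_nonneg (by omega) l)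
  have hbias : θ (layerSum a m + a (m + 1) * a m + i) < 0 := by
    rw [add_assoc]; exact hblock _ (by omega)
  exact max_eq_right (by rw [affApply]; linarith)

lemma realization_eq_of_layerNeg (hj1 : 1 < j) (hjD : j < D) (hθ : layerNeg a j θ)
    (hθ' : layerNeg a j θ') (hagree : ∀ i, layerSum a j ≤ i → θ i = θ' i)
    (x x' : Fin (a 0) → ℝ) : realization a D θ x = realization a D θ' x' := by
  rw [realization, realization, fwd_congr_of_le (x := x) (x' := x') hagree
      (by rw [fwd_eq_zero_of_layerNeg hj1 hθ, fwd_eq_zero_of_layerNeg hj1 hθ'])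
      (show j ≤ D - 1 by omega),
    affApply_congr fun i hi => hagree i ((layerSum_mono a (show j ≤ D - 1 by omega)).trans hi)]

lemma Inactive.realization_eq (h : Inactive a D θ) (x x' : Fin (a 0) → ℝ) :
    realization a D θ x = realization a D θ x' := by
  obtain ⟨j, hj1, hjD, hθ⟩ := h
  exact realization_eq_of_layerNeg hj1 hjD hθ hθ (fun _ _ => rfl) x x'

lemma eventually_realization_update_eq (hj1 : 1 < j) (hjD : j < D) (hθ : layerNeg a j θ)
    {i : ℕ} (hi : i ∈ layerBlock a j) :
    ∀ᶠ s in 𝓝 (θ i), realization a D (Function.update θ i s) = realization a D θ := by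
  rw [layerNeg_iff] at hθ
  filter_upwards [Iio_mem_nhds (hθ i hi)] with s hs
  funext x
  refine realization_eq_of_layerNeg hj1 hjD (layerNeg_iff.2 fun i' hi' => ?_) (layerNeg_iff.2 hθ)
    (fun i' hi' => Function.update_of_ne ?_ _ _) x x
  · rcases eq_or_ne i' i with rfl | hne
    · simpa using hs
    · simpa [hne] using hθ i' hi'
  · simp only [layerBlock, Finset.mem_Ico] at hi
    omega

lemma hasDerivAt_zero_of_layerNeg {F : ℝ → ℝ} (hj1 : 1 < j) (hjD : j < D)
    (hθ : layerNeg a j θ) {i : ℕ} (hi : i ∈ layerBlock a j)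
    (hF : ∀ s, realization a D (Function.update θ i s) = realization a D θ → F s = F (θ i)) :
    HasDerivAt F 0 (θ i) :=
  (hasDerivAt_const _ _).congr_of_eventuallyEq <|
    (eventually_realization_update_eq hj1 hjD hθ hi).mono fun s hs => hF s hs

lemma Inactive.of_gradientStep {Θ : ℕ → ℕ → ℝ} {g : ℕ → (ℕ → ℝ) → ℕ → ℝ} {γ : ℕ → ℝ}
    (hstep : ∀ t i, Θ (t + 1) i = Θ t i - γ (t + 1) * g (t + 1) (Θ t) i)
    (hg : ∀ t θ j i, 1 < j → j < D → layerNeg a j θ → i ∈ layerBlock a j → g t θ i = 0)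
    (h0 : Inactive a D (Θ 0)) (t : ℕ) : Inactive a D (Θ t) := by
  obtain ⟨j, hj1, hjD, hneg⟩ := h0
  refine ⟨j, hj1, hjD, ?_⟩
  induction t with
  | zero => exact hneg
  | succ t ih =>
    rw [layerNeg_iff] at ih ⊢
    intro i hi
    rw [hstep, hg _ _ _ _ hj1 hjD (layerNeg_iff.2 ih) hi, mul_zero, sub_zero]
    exact ih i hi

end Network

section Probability

variable {Ω : Type*} [MeasurableSpace Ω] {μ : Measure Ω}

lemma measure_lt_zero_of_map_eq_uniform {Z : Ω → ℝ} (hZ : Measurable Z) {c : ℝ} (hc : 0 < c)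
    (hunif : μ.map Z = (ENNReal.ofReal (2 * c))⁻¹ • volume.restrict (Set.Icc (-c) c)) :
    μ {ω | Z ω < 0} = 2⁻¹ := by
  have hIco : Set.Iio (0 : ℝ) ∩ Set.Icc (-c) c = Set.Ico (-c) 0 := by
    ext y; simp only [Set.mem_inter_iff, Set.mem_Iio, Set.mem_Icc, Set.mem_Ico]
    constructor
    · exact fun h => ⟨h.2.1, h.1⟩
    · exact fun h => ⟨h.2, h.1, by linarith⟩
  change μ (Z ⁻¹' Set.Iio 0) = 2⁻¹
  rw [← Measure.map_apply hZ measurableSet_Iio, hunif,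
    Measure.smul_apply, Measure.restrict_apply measurableSet_Iio, hIco, Real.volume_Ico,
    smul_eq_mul, sub_neg_eq_add, zero_add, ENNReal.ofReal_mul zero_le_two,
    ENNReal.mul_inv (by simp) (by simp), mul_assoc,
    ENNReal.inv_mul_cancel (ENNReal.ofReal_pos.2 hc).ne' ENNReal.ofReal_ne_top, mul_one]
  simp

lemma iIndep.measure_biInter_of_pairwiseDisjoint [IsProbabilityMeasure μ] {ι κ : Type*}
    {m : ι → MeasurableSpace Ω} (h_le : ∀ i, m i ≤ ‹MeasurableSpace Ω›) (h : iIndep m μ)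
    {b : κ → Set ι} {J : Finset κ}
    (hdisj : (J : Set κ).PairwiseDisjoint b) {A : κ → Set Ω}
    (hA : ∀ j ∈ J, MeasurableSet[⨆ i ∈ b j, m i] (A j)) :
    μ (⋂ j ∈ J, A j) = ∏ j ∈ J, μ (A j) := by
  classical
  induction J using Finset.induction with
  | empty => simp
  | insert j₀ J hj₀ ih =>
    have hrest : MeasurableSet[⨆ i ∈ ⋃ j ∈ J, b j, m i] (⋂ j ∈ J, A j) :=
      .biInter J.countable_toSet fun j hj =>
        biSup_mono (f := m) (fun i hi => Set.mem_biUnion hj hi) _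
          (hA j (Finset.mem_insert_of_mem hj))
    have hdisj₀ : Disjoint (b j₀) (⋃ j ∈ J, b j) :=
      Set.disjoint_iUnion₂_right.2 fun j hj =>
        hdisj (by simp) (by simp [hj]) (fun h => hj₀ (h ▸ hj))
    rw [Finset.set_biInter_insert, Finset.prod_insert hj₀,
      (Indep_iff _ _ _).1 (indep_iSup_of_disjoint h_le h hdisj₀) _ _
        (hA j₀ (Finset.mem_insert_self _ _)) hrest,
      ih (hdisj.subset (by simp)) fun j hj => hA j (Finset.mem_insert_of_mem hj)]

lemma setOf_inactive_eq (a : ℕ → ℕ) (D : ℕ) :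
    {θ : ℕ → ℝ | Inactive a D θ} = ⋃ j ∈ Finset.Ioo 1 D, ⋂ i ∈ layerBlock a j, {θ | θ i < 0} := by
  ext θ
  simp [Inactive, layerNeg_iff, and_assoc]

lemma measurableSet_inactive (a : ℕ → ℕ) (D : ℕ) : MeasurableSet {θ : ℕ → ℝ | Inactive a D θ} := by
  rw [setOf_inactive_eq]
  exact Finset.measurableSet_biUnion _ fun j _ => Finset.measurableSet_biInter _
    fun i _ => measurableSet_lt (measurable_pi_apply i) measurable_const

lemma measureReal_inactive [IsProbabilityMeasure μ] {Z : Ω → ℕ → ℝ} (hZ : Measurable Z)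
    (hind : iIndepFun (fun i ω => Z ω i) μ) (hhalf : ∀ i, μ {ω | Z ω i < 0} = 2⁻¹)
    (a : ℕ → ℕ) (D : ℕ) :
    μ.real {ω | Inactive a D (Z ω)} =
      1 - ∏ j ∈ Finset.Ioo 1 D, (1 - (1 / 2 : ℝ) ^ (a j * (a (j - 1) + 1))) := by
  set A : ℕ → Set Ω := fun j => ⋂ i ∈ layerBlock a j, {ω | Z ω i < 0}
  set m : ℕ → MeasurableSpace Ω := fun i => MeasurableSpace.comap (Z · i) inferInstance
  have h_le : ∀ i, m i ≤ ‹MeasurableSpace Ω› := fun i => ((measurable_pi_apply i).comp hZ).comap_le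
  have hmeas : ∀ i, MeasurableSet[m i] {ω | Z ω i < 0} := fun i =>
    ⟨Set.Iio 0, measurableSet_Iio, rfl⟩
  have hAm : ∀ j, MeasurableSet[⨆ i ∈ (layerBlock a j : Set ℕ), m i] (A j) := fun j =>
    Finset.measurableSet_biInter _ fun i hi =>
      (le_iSup₂ (f := fun i (_ : i ∈ (layerBlock a j : Set ℕ)) => m i) i hi : m i ≤ _) _ (hmeas i)
  have hAm' : ∀ j, MeasurableSet (A j) := fun j => iSup₂_le (fun i _ => h_le i) _ (hAm j)
  have hA : ∀ j ∈ Finset.Ioo 1 D, μ.real (A j) = (1 / 2) ^ (a j * (a (j - 1) + 1)) := by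
    intro j hj
    rw [measureReal_def, hind.meas_biInter fun i _ => hmeas i,
      Finset.prod_congr rfl fun i _ => hhalf i, Finset.prod_const,
      card_layerBlock a (by simp at hj; omega)]
    simp
  have hset : {ω | Inactive a D (Z ω)} = (⋂ j ∈ Finset.Ioo 1 D, (A j)ᶜ)ᶜ := by
    ext ω
    simp [A, Inactive, layerNeg_iff, and_assoc]
  rw [hset, probReal_compl_eq_one_sub (Finset.measurableSet_biInter _ fun j _ => (hAm' j).compl),
    measureReal_def, iIndep.measure_biInter_of_pairwiseDisjoint h_le hind.iIndep
      (fun j _ j' _ h => Finset.disjoint_coe.2 (disjoint_layerBlock a h)) fun j _ => (hAm j).compl,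
    ENNReal.toReal_prod]
  refine congrArg _ (Finset.prod_congr rfl fun j hj => ?_)
  rw [← measureReal_def, probReal_compl_eq_one_sub (hAm' j), hA j hj]

lemma measureReal_biInter_preimage_eq_pow [IsProbabilityMeasure μ] {β : Type*} [MeasurableSpace β]
    {Θ₀ : ℕ → Ω → β} (hind : iIndepFun (fun n => Θ₀ (n + 1)) μ)
    (hident : ∀ n, 1 ≤ n → IdentDistrib (Θ₀ n) (Θ₀ 1) μ μ) {S : Set β} (hS : MeasurableSet S)
    (N : ℕ) : μ.real (⋂ n ∈ Finset.range N, Θ₀ (n + 1) ⁻¹' S) = μ.real (Θ₀ 1 ⁻¹' S) ^ N := by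
  rw [measureReal_def, hind.meas_biInter fun n _ => ⟨S, hS, rfl⟩,
    Finset.prod_congr rfl fun n _ => (hident (n + 1) (by omega)).measure_mem_eq hS,
    Finset.prod_const, Finset.card_range, ENNReal.toReal_pow, measureReal_def]

lemma measureReal_biInter_inactive [IsProbabilityMeasure μ] {Θ₀ : ℕ → Ω → ℕ → ℝ}
    (hmeas : Measurable (Θ₀ 1)) (hind : iIndepFun (fun n => Θ₀ (n + 1)) μ)
    (hident : ∀ n, 1 ≤ n → IdentDistrib (Θ₀ n) (Θ₀ 1) μ μ)
    (hcoord : iIndepFun (fun i ω => Θ₀ 1 ω i) μ) {c : ℝ} (hc : 0 < c)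
    (hunif : ∀ i, μ.map (fun ω => Θ₀ 1 ω i) =
      (ENNReal.ofReal (2 * c))⁻¹ • volume.restrict (Set.Icc (-c) c))
    (a : ℕ → ℕ) (D N : ℕ) :
    μ.real (⋂ n ∈ Finset.range N, Θ₀ (n + 1) ⁻¹' {θ | Inactive a D θ}) =
      (1 - ∏ j ∈ Finset.Ioo 1 D, (1 - (1 / 2 : ℝ) ^ (a j * (a (j - 1) + 1)))) ^ N := by
  rw [measureReal_biInter_preimage_eq_pow hind hident (measurableSet_inactive a D),
    Set.preimage_ofPred_eq, measureReal_inactive hmeas hcoord fun i =>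
      measure_lt_zero_of_map_eq_uniform ((measurable_pi_apply i).comp hmeas) hc (hunif i)]

end Probability

lemma exists_ge_le_one_sub_pow_pow {ρ κ : ℝ} (hρ : 0 < ρ) (hρ1 : ρ ≤ 1) (hκ : κ < 1)
    (N n₀ : ℕ) : ∃ n ≥ n₀, κ ≤ (1 - (1 - ρ) ^ n) ^ N := by
  have hlim : Tendsto (fun n : ℕ => (1 - (1 - ρ) ^ n) ^ N) atTop (𝓝 1) := by
    simpa using ((tendsto_pow_atTop_nhds_zero_of_lt_one (by linarith) (by linarith)).const_sub
      (1 : ℝ)).pow N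
  obtain ⟨n, hn, hκn⟩ := ((eventually_ge_atTop n₀).and (hlim.eventually (lt_mem_nhds hκ))).exists
  exact ⟨n, hn, hκn.le⟩

lemma mul_le_integral_of_forall_mem_le {Ω : Type*} [MeasurableSpace Ω] {μ : Measure Ω}
    [IsFiniteMeasure μ] {f : Ω → ℝ} (hf : AEStronglyMeasurable f μ) (hf0 : ∀ ω, 0 ≤ f ω)
    (hf1 : ∀ ω, f ω ≤ 1) {E : Set Ω} (hE : MeasurableSet E) {κ c : ℝ} (hκ : κ ≤ μ.real E)
    (hc : 0 ≤ c) (hfE : ∀ ω ∈ E, c ≤ f ω) : κ * c ≤ ∫ ω, f ω ∂μ := by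
  have hint : Integrable f μ := (integrable_const (1 : ℝ)).mono' hf
    (.of_forall fun ω => by rw [Real.norm_of_nonneg (hf0 ω)]; exact hf1 ω)
  calc κ * c ≤ μ.real E * c := mul_le_mul_of_nonneg_right hκ hc
    _ = ∫ _ in E, c ∂μ := by rw [setIntegral_const, smul_eq_mul]
    _ ≤ ∫ ω in E, f ω ∂μ := setIntegral_mono_on integrableOn_const hint.integrableOn hE hfE
    _ ≤ ∫ ω, f ω ∂μ := setIntegral_le_integral hint (.of_forall hf0)

lemma iInf_integral_abs_sub_le_of_forall_eq {Ω α : Type*} [MeasurableSpace Ω] [MeasurableSpace α]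
    {μ : Measure Ω} {X : Ω → α} (hX : Measurable X) {f : α → ℝ} (hf : Measurable f)
    {g : α → ℝ} {b : ℝ} (hg : ∀ x, g x = b) :
    ⨅ b : ℝ, ∫ ω, |b - f (X ω)| ∂μ ≤ ∫ x, |g x - f x| ∂(μ.map X) := by
  simp only [hg]
  rw [integral_map (f := fun x => |b - f x|) hX.aemeasurable (by fun_prop)]
  exact ciInf_le ⟨0, by rintro _ ⟨b, rfl⟩; exact integral_nonneg fun _ => abs_nonneg _⟩ b

def uniformArch (d W D : ℕ) (i : ℕ) : ℕ := if i = 0 then d else if i < D then W else 1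

section uniformArch

variable {d W D : ℕ}

@[simp] lemma uniformArch_zero : uniformArch d W D 0 = d := rfl

lemma uniformArch_self (hD : 0 < D) : uniformArch d W D D = 1 := by
  simp [uniformArch, hD.ne']

lemma uniformArch_of_lt {i : ℕ} (hi : 0 < i) (hiD : i < D) : uniformArch d W D i = W := by
  simp [uniformArch, hi.ne', hiD]

lemma uniformArch_pos (hd : 0 < d) (hW : 0 < W) (i : ℕ) : 0 < uniformArch d W D i := by
  unfold uniformArch; split_ifs <;> omega

lemma prod_uniformArch (ρ : ℝ) :
    ∏ j ∈ Finset.Ioo 1 D, (1 - ρ ^ (uniformArch d W D j * (uniformArch d W D (j - 1) + 1))) =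
      (1 - ρ ^ (W * (W + 1))) ^ (D - 2) := by
  have hwidth : ∀ j ∈ Finset.Ioo 1 D,
      uniformArch d W D j * (uniformArch d W D (j - 1) + 1) = W * (W + 1) := by
    intro j hj
    rw [Finset.mem_Ioo] at hj
    rw [uniformArch_of_lt (by omega) hj.2, uniformArch_of_lt (by omega) (by omega)]
  rw [Finset.prod_congr rfl (g := fun _ => 1 - ρ ^ (W * (W + 1))) fun j hj => by rw [hwidth j hj],
    Finset.prod_const, Nat.card_Ioo, Nat.sub_sub]

end uniformArch

/-- In the SGD setting with i.i.d. uniform-on-`[-c,c]` initializations, for every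
`κ ∈ (0,1)` and every `kk ∈ ℕ` there is an architecture with depth and all hidden widths
at least `kk` such that, for all batch sizes `M` and all step counts `T`, the expected
truncated true risk of the selected network is at least
`κ ⬝ min{inf_b E[|b - E(X)|], 1}`. -/
theorem stmt15 {Ω : Type*} [MeasurableSpace Ω] (μ : Measure Ω) [IsProbabilityMeasure μ]
    (d : ℕ) (hd : 0 < d)
    (𝔠 : ℝ → ℝ) (γ : ℕ → ℝ) (c : ℝ) (hc : 0 < c)
    -- the training data
    (X : ℕ → ℕ → ℕ → Ω → Fin d → ℝ)
    (Y : ℕ → ℕ → ℕ → Ω → ℝ)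
    (hXm : Measurable (X 0 0 0))
    (Etgt : (Fin d → ℝ) → ℝ) (hEm : Measurable Etgt)
    -- the SGD trajectories `Θ D a M n t` and gradients `G` of the empirical risk
    (Θ : ℕ → (ℕ → ℕ) → ℕ → ℕ → ℕ → Ω → ℕ → ℝ)
    (G : ℕ → (ℕ → ℕ) → ℕ → ℕ → ℕ → (ℕ → ℝ) → Ω → ℕ → ℝ)
    (hG : ∀ (D : ℕ) (a : ℕ → ℕ) (hD : 0 < D) (hpos : ∀ i, i ≤ D → 0 < a i)
      (ha0 : a 0 = d) (haD : a D = 1) (M : ℕ) (hM : 1 ≤ M) (n t : ℕ) (θ : ℕ → ℝ)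
      (ω : Ω) (i : ℕ),
      DifferentiableAt ℝ (fun s => (1 / (M : ℝ)) * ∑ j ∈ Finset.Icc 1 M,
        |𝔠 (realization a D (Function.update θ i s)
            (fun q => X n t j ω (Fin.cast ha0 q)) ⟨0, by omega⟩) - Y n t j ω| ^ 2)
        (θ i) →
      G D a M n t θ ω i = deriv (fun s => (1 / (M : ℝ)) * ∑ j ∈ Finset.Icc 1 M,
        |𝔠 (realization a D (Function.update θ i s)
            (fun q => X n t j ω (Fin.cast ha0 q)) ⟨0, by omega⟩) - Y n t j ω| ^ 2)
        (θ i))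
    (hΘstep : ∀ (D : ℕ) (a : ℕ → ℕ) (M n t : ℕ) (ω : Ω) (i : ℕ),
      Θ D a M n (t + 1) ω i =
        Θ D a M n t ω i - γ (t + 1) * G D a M n (t + 1) (Θ D a M n t ω) ω i)
    (hmeasΘ : ∀ D a M n t, Measurable (Θ D a M n t))
    -- the initializations are i.i.d., uniformly distributed on `[-c,c]^{P(a)}`
    -- with independent coordinates
    (hindep : ∀ D a M, iIndepFun
      (fun n ω => Θ D a M (n + 1) 0 ω) μ)
    (hident : ∀ D a M n, 1 ≤ n → IdentDistrib (Θ D a M n 0) (Θ D a M 1 0) μ μ)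
    (hcoord : ∀ D a M, iIndepFun
      (fun i ω => Θ D a M 1 0 ω i) μ)
    (hunif : ∀ D a M (i : ℕ), Measure.map (fun ω => Θ D a M 1 0 ω i) μ =
      (ENNReal.ofReal (2 * c))⁻¹ • MeasureTheory.volume.restrict (Set.Icc (-c) c))
    -- an arbitrary random selection rule `k D a M N T : Ω → {1,…,N} × ℕ`
    (k : ℕ → (ℕ → ℕ) → ℕ → ℕ → ℕ → Ω → ℕ × ℕ)
    (hk : ∀ D a M N T ω, 1 ≤ (k D a M N T ω).1 ∧ (k D a M N T ω).1 ≤ N)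
    -- measurability of the truncated true risk of the selected network
    (hmeasrisk : ∀ (D : ℕ) (a : ℕ → ℕ) (hD : 0 < D) (hpos : ∀ i, i ≤ D → 0 < a i)
      (ha0 : a 0 = d) (haD : a D = 1) (M N T : ℕ),
      Measurable (fun ω => min
        (∫ x, |𝔠 (realization a D
            (Θ D a M (k D a M N T ω).1 (k D a M N T ω).2 ω)
            (fun q => x (Fin.cast ha0 q)) ⟨0, by omega⟩) - Etgt x|
          ∂(Measure.map (X 0 0 0) μ)) 1)) :
    ∀ κ ∈ Set.Ioo (0 : ℝ) 1, ∀ kk NN : ℕ, 1 ≤ NN →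
      ∃ (D : ℕ) (a : ℕ → ℕ) (hD : 0 < D) (hpos : ∀ i, i ≤ D → 0 < a i)
        (ha0 : a 0 = d) (haD : a D = 1),
        kk ≤ D ∧ (∀ j, 1 ≤ j → j < D → kk ≤ a j) ∧
        ∀ M, 1 ≤ M → ∀ T : ℕ,
          κ * min (⨅ b : ℝ, ∫ ω, |b - Etgt (X 0 0 0 ω)| ∂μ) 1 ≤
            ∫ ω, min
              (∫ x, |𝔠 (realization a D
                  (Θ D a M (k D a M NN T ω).1 (k D a M NN T ω).2 ω)
                  (fun q => x (Fin.cast ha0 q)) ⟨0, by omega⟩) - Etgt x|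
                ∂(Measure.map (X 0 0 0) μ)) 1 ∂μ := by
  intro κ hκ kk N hN
  set W := max kk 1
  obtain ⟨n, hn, hκn⟩ := exists_ge_le_one_sub_pow_pow (ρ := (1 / 2) ^ (W * (W + 1)))
    (by positivity) (pow_le_one₀ (by norm_num) (by norm_num)) hκ.2 N kk
  set a := uniformArch d W (n + 2)
  have hD : 0 < n + 2 := by omega
  have hpos : ∀ i, i ≤ n + 2 → 0 < a i := fun i _ => uniformArch_pos hd (by omega) i
  have ha0 : a 0 = d := uniformArch_zero
  have haD : a (n + 2) = 1 := uniformArch_self hD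
  refine ⟨n + 2, a, hD, hpos, ha0, haD, by omega,
    fun j h1 h2 => (le_max_left kk 1).trans (uniformArch_of_lt h1 h2).ge, fun M hM T => ?_⟩
  set E := ⋂ m ∈ Finset.range N, Θ (n + 2) a M (m + 1) 0 ⁻¹' {θ | Inactive a (n + 2) θ}
  have hE : κ ≤ μ.real E := by
    rw [measureReal_biInter_inactive (Θ₀ := fun m => Θ _ a M m 0) (hmeasΘ _ a M 1 0)
      (hindep _ a M) (hident _ a M) (hcoord _ a M) hc (hunif _ a M), prod_uniformArch]
    simpa using hκn
  have hgrad : ∀ m ω t θ j i, 1 < j → j < n + 2 → layerNeg a j θ → i ∈ layerBlock a j →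
      G (n + 2) a M m t θ ω i = 0 := by
    intro m ω t θ j i hj1 hjD hθ hi
    refine (hG _ a hD hpos ha0 haD M hM m t θ ω i ?_).trans ?_
    · exact (hasDerivAt_zero_of_layerNeg hj1 hjD hθ hi fun s hs => by
        simp only [hs, Function.update_eq_self]).differentiableAt
    · exact (hasDerivAt_zero_of_layerNeg hj1 hjD hθ hi fun s hs => by
        simp only [hs, Function.update_eq_self]).deriv
  refine mul_le_integral_of_forall_mem_le (hmeasrisk _ a hD hpos ha0 haD M N T).aestronglyMeasurable
    (fun ω => le_min (integral_nonneg fun _ => abs_nonneg _) zero_le_one)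
    (fun ω => min_le_right _ _)
    (Finset.measurableSet_biInter _ fun m _ => hmeasΘ _ a M _ 0 (measurableSet_inactive a _)) hE
    (le_min (le_ciInf fun b => integral_nonneg fun _ => abs_nonneg _) zero_le_one)
    fun ω hω => min_le_min ?_ le_rfl
  obtain ⟨hk1, hkN⟩ := hk (n + 2) a M N T ω
  obtain ⟨m, hm, hmk⟩ : ∃ m < N, m + 1 = (k (n + 2) a M N T ω).1 :=
    ⟨(k (n + 2) a M N T ω).1 - 1, by omega, by omega⟩
  have hinit := Set.mem_iInter₂.1 hω m (Finset.mem_range.2 hm)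
  rw [Set.mem_preimage, hmk] at hinit
  have hsel := Inactive.of_gradientStep (Θ := fun t => Θ (n + 2) a M (k (n + 2) a M N T ω).1 t ω)
    (fun t i => hΘstep _ a M _ t ω i) (hgrad _ ω) hinit (k (n + 2) a M N T ω).2
  exact iInf_integral_abs_sub_le_of_forall_eq hXm hEm fun x =>
    congrArg 𝔠 (congrFun (hsel.realization_eq _ fun _ => 0) _)
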